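/- arXiv:2507.17947 — 2 statements merged into one kernel-verified Lean document; each statement's English description precedes it below -/
import Mathlib

section
/- Every nonempty ascent sequence avoiding both 021 and 1001 decomposes uniquely as π^{(0)} π^{(1)} ⋯ π^{(k)} for some k ≥ 0, where π^{(0)} is a nonempty run of 0's and for each j ∈ [k], π^{(j)} = a_j^{α_j} 0 a_j^{β_j} 0^{γ_j} or π^{(j)} = a_j^{α_j} 0^{γ_j} with α_j, β_j > 0, γ_j ≥ 0 and 1 = a_1 < a_2 < ⋯ < a_k. -/
open PowerSeries

/-- Number of ascents of a word. -/
def ascN (w : List ℕ) : ℕ := ((w.zip w.tail).filter (fun p => decide (p.1 < p.2))).length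

/-- `w` is an ascent sequence. -/
def IsAscentSeq (w : List ℕ) : Prop :=
  (w ≠ [] → w.headD 0 = 0) ∧
  ∀ i, 0 < i → i < w.length → w.getD i 0 ≤ ascN (w.take i) + 1

/-- `w` contains the pattern `τ` (classical pattern containment). -/
def ContainsPat (w τ : List ℕ) : Prop :=
  ∃ s : List ℕ, s.Sublist w ∧ s.length = τ.length ∧
    ∀ j k, j < τ.length → k < τ.length →
      ((s.getD j 0 < s.getD k 0 ↔ τ.getD j 0 < τ.getD k 0) ∧
       (s.getD j 0 = s.getD k 0 ↔ τ.getD j 0 = τ.getD k 0))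

def AvoidsPat (w τ : List ℕ) : Prop := ¬ ContainsPat w τ

/-- Ascent sequences of length `n` avoiding `021` and the pattern `τ`. -/
def BSet (n : ℕ) (τ : List ℕ) : Set (List ℕ) :=
  {w | w.length = n ∧ IsAscentSeq w ∧ AvoidsPat w [0,2,1] ∧ AvoidsPat w τ}

/-- Staircase word: each letter equals or is one more than the previous. -/
def IsStaircase (w : List ℕ) : Prop := w.Chain' (fun a b => b = a ∨ b = a + 1)

/-- Number of jumps of a nondecreasing word starting with 0. -/
def JumpCount (w : List ℕ) : ℕ := w.foldr max 0 + 1 - w.toFinset.card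

/-- Nondecreasing words of length `n` starting with 0 with at most `r` jumps. -/
def NDSet (n r : ℕ) : Set (List ℕ) :=
  {w | w.length = n ∧ w ≠ [] ∧ w.headD 0 = 0 ∧ List.Pairwise (· ≤ ·) w ∧ JumpCount w ≤ r}

/-- `u` is a unit with letter `a`: `a^α 0 a^β 0^γ` or `a^α 0^γ`. -/
def UnitAt (u : List ℕ) (a : ℕ) : Prop :=
  ∃ α γ : ℕ, 1 ≤ α ∧
    (u = List.replicate α a ++ List.replicate γ 0 ∨
     ∃ β : ℕ, 1 ≤ β ∧
       u = List.replicate α a ++ [0] ++ List.replicate β a ++ List.replicate γ 0)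

namespace B1001

def bpred (a x : ℕ) : Bool := x == 0 || x == a

def decompAux : List ℕ → List (List ℕ)
  | [] => []
  | x :: xs =>
    (x :: xs.takeWhile (bpred x)) :: decompAux (xs.dropWhile (bpred x))
termination_by w => w.length
decreasing_by
  simp only [List.length_cons]
  exact Nat.lt_succ_of_le ((List.dropWhile_sublist _).length_le)

lemma flatten_decompAux (w : List ℕ) : (decompAux w).flatten = w := by
  induction w using decompAux.induct with
  | case1 => simp [decompAux]
  | case2 x xs ih =>
    rw [decompAux]
    simp only [List.flatten_cons, ih, List.cons_append,
      List.takeWhile_append_dropWhile]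

lemma head_decompAux {w : List ℕ} (hw : w ≠ []) :
    ((decompAux w).headD []).headD 0 = w.headD 0 := by
  obtain ⟨x, xs, rfl⟩ := List.exists_cons_of_ne_nil hw
  rw [decompAux]; rfl

lemma decompAux_ne_nil {w : List ℕ} (hw : w ≠ []) : decompAux w ≠ [] := by
  obtain ⟨x, xs, rfl⟩ := List.exists_cons_of_ne_nil hw
  rw [decompAux]; simp

lemma takeWhile_append_all {p : ℕ → Bool} {t r : List ℕ} (h : ∀ y ∈ t, p y = true) :
    (t ++ r).takeWhile p = t ++ r.takeWhile p := by
  induction t with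
  | nil => simp
  | cons a t ih =>
    have := h a (by simp)
    simp [List.takeWhile_cons, this, ih fun y hy => h y (by simp [hy])]

lemma dropWhile_append_all {p : ℕ → Bool} {t r : List ℕ} (h : ∀ y ∈ t, p y = true) :
    (t ++ r).dropWhile p = r.dropWhile p := by
  induction t with
  | nil => simp
  | cons a t ih =>
    have := h a (by simp)
    simp [List.dropWhile_cons, this, ih fun y hy => h y (by simp [hy])]

lemma dropWhile_head_false {p : ℕ → Bool} : ∀ {l : List ℕ} {b : ℕ} {r : List ℕ},
    l.dropWhile p = b :: r → p b = false := by
  intro l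
  induction l with
  | nil => intro b r h; simp at h
  | cons a l ih =>
    intro b r h
    by_cases hpa : p a = true
    · rw [List.dropWhile_cons, if_pos hpa] at h
      exact ih h
    · rw [List.dropWhile_cons, if_neg hpa] at h
      obtain ⟨rfl, rfl⟩ := List.cons_eq_cons.mp h
      simpa using hpa

/-- Uniqueness core: `decompAux` reproduces any decomposition into blocks with
strictly increasing heads whose letters are 0 or the head. -/
lemma decompAux_flatten_eq : ∀ L : List (List ℕ),
    (∀ u ∈ L, u ≠ [] ∧ ∀ x ∈ u, x = 0 ∨ x = u.headD 0) →
    List.Chain' (fun u v => u.headD 0 < v.headD 0) L →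
    decompAux L.flatten = L := by
  intro L
  induction L with
  | nil => intro _ _; simp [decompAux]
  | cons u L ih =>
    intro hblocks hchain
    obtain ⟨hu, hux⟩ := hblocks u (by simp)
    obtain ⟨x, t, rfl⟩ := List.exists_cons_of_ne_nil hu
    have hxt : ∀ y ∈ t, bpred x y = true := by
      intro y hy
      rcases hux y (by simp [hy]) with h | h <;> simp [bpred, h]
    have htail : (L.flatten).takeWhile (bpred x) = [] ∧
        (L.flatten).dropWhile (bpred x) = L.flatten := by
      cases L with
      | nil => simp
      | cons v L' =>
        obtain ⟨hv, _⟩ := hblocks v (by simp)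
        obtain ⟨b, s, rfl⟩ := List.exists_cons_of_ne_nil hv
        have hlt : x < b := (List.isChain_cons_cons.mp hchain).1
        have hb : bpred x b = false := by
          simp [bpred]; omega
        constructor <;> simp [List.flatten_cons, List.takeWhile_cons, hb,
          List.dropWhile_cons]
    have hrec : decompAux L.flatten = L :=
      ih (fun v hv => hblocks v (by simp [hv])) hchain.tail
    show decompAux ((x :: t) ++ L.flatten) = _
    rw [List.cons_append, decompAux, takeWhile_append_all hxt,
      dropWhile_append_all hxt, htail.1, htail.2, hrec, List.append_nil]

lemma UnitAt.basic {u : List ℕ} {a : ℕ} (h : UnitAt u a) :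
    u ≠ [] ∧ u.headD 0 = a ∧ ∀ x ∈ u, x = 0 ∨ x = a := by
  obtain ⟨α, γ, hα, h | ⟨β, hβ, h⟩⟩ := h <;> subst h
  · obtain ⟨α, rfl⟩ := Nat.exists_eq_add_of_le hα
    refine ⟨by simp [List.replicate_add], by simp [List.replicate_add], ?_⟩
    intro x hx
    simp only [List.mem_append, List.mem_replicate] at hx
    rcases hx with h | h
    · exact Or.inr h.2
    · exact Or.inl h.2
  · obtain ⟨α, rfl⟩ := Nat.exists_eq_add_of_le hα
    refine ⟨by simp [List.replicate_add], by simp [List.replicate_add], ?_⟩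
    intro x hx
    simp only [List.append_assoc, List.mem_append, List.mem_replicate,
      List.mem_singleton] at hx
    rcases hx with h | h | h | h
    · exact Or.inr h.2
    · exact Or.inl h
    · exact Or.inr h.2
    · exact Or.inl h.2

/-- Split off the maximal leading run of `a`'s from a `{0,a}`-word. -/
lemma split_run (a : ℕ) (ha : a ≠ 0) :
    ∀ t : List ℕ, (∀ x ∈ t, x = 0 ∨ x = a) →
    ∃ n r, t = List.replicate n a ++ r ∧ (∀ x ∈ r, x = 0 ∨ x = a) ∧
      (r = [] ∨ ∃ r', r = 0 :: r') := by
  intro t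
  induction t with
  | nil => exact fun _ => ⟨0, [], by simp, by simp, Or.inl rfl⟩
  | cons x t ih =>
    intro ht
    rcases ht x (by simp) with h | h
    · subst h
      exact ⟨0, 0 :: t, by simp, ht, Or.inr ⟨t, rfl⟩⟩
    · subst h
      obtain ⟨n, r, h1, h2, h3⟩ := ih (fun y hy => ht y (by simp [hy]))
      exact ⟨n + 1, r, by simp [List.replicate_succ, h1], h2, h3⟩

lemma contra_sublist (a n m : ℕ) (s' : List ℕ) (hmem : a ∈ s') :
    ([a,0,0,a] : List ℕ).Sublist
      (a :: (List.replicate n a ++ 0 :: (List.replicate m a ++ 0 :: s'))) := by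
  have h1 : ([0,a] : List ℕ).Sublist (0 :: s') :=
    (List.singleton_sublist.mpr hmem).cons₂ 0
  have h2 : ([0,a] : List ℕ).Sublist (List.replicate m a ++ 0 :: s') :=
    h1.trans (List.sublist_append_right _ _)
  have h3 : ([0,0,a] : List ℕ).Sublist (0 :: (List.replicate m a ++ 0 :: s')) :=
    h2.cons₂ 0
  have h4 : ([0,0,a] : List ℕ).Sublist
      (List.replicate n a ++ 0 :: (List.replicate m a ++ 0 :: s')) :=
    h3.trans (List.sublist_append_right _ _)
  exact h4.cons₂ a

/-- A list over letters `{0, a}` starting with `a` and avoiding `a00a` as a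
sublist is a unit. -/
lemma unit_of_shape {a : ℕ} (ha : a ≠ 0) {t : List ℕ}
    (ht : ∀ x ∈ t, x = 0 ∨ x = a)
    (hno : ¬ ([a,0,0,a] : List ℕ).Sublist (a :: t)) :
    UnitAt (a :: t) a := by
  obtain ⟨n, r, rfl, hr, hr0⟩ := split_run a ha t ht
  rcases hr0 with rfl | ⟨r', rfl⟩
  · -- t = a^n
    refine ⟨n + 1, 0, by omega, Or.inl ?_⟩
    simp [List.replicate_succ]
  · have hr' : ∀ x ∈ r', x = 0 ∨ x = a := fun x hx => hr x (by simp [hx])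
    by_cases haR : a ∈ r'
    · obtain ⟨m, s, rfl, hs, hs0⟩ := split_run a ha r' hr'
      rcases hs0 with rfl | ⟨s', rfl⟩
      · -- r' = a^m, so m ≥ 1 since a ∈ r'
        have hm : 1 ≤ m := by
          rcases Nat.eq_zero_or_pos m with rfl | h
          · simp at haR
          · exact h
        exact ⟨n + 1, 0, by omega, Or.inr ⟨m, hm, by simp [List.replicate_succ]⟩⟩
      · rcases Nat.eq_zero_or_pos m with rfl | hm
        · -- bad: a ∈ s' gives a00a
          exfalso
          have haS : a ∈ s' := by
            simp only [List.replicate_zero, List.nil_append] at haR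
            rcases List.mem_cons.mp haR with h | h
            · exact absurd h ha
            · exact h
          exact hno (by simpa using contra_sublist a n 0 s' haS)
        · -- a ∉ s', s' all zeros
          have hsz : ∀ x ∈ s', x = 0 := by
            intro x hx
            rcases hs x (by simp [hx]) with h | h
            · exact h
            · exfalso
              exact hno (contra_sublist a n m s' (h ▸ hx))
          obtain ⟨k, rfl⟩ : ∃ k, s' = List.replicate k 0 :=
            ⟨s'.length, List.eq_replicate_of_mem hsz⟩
          refine ⟨n + 1, k + 1, by omega, Or.inr ⟨m, hm, ?_⟩⟩
          simp [List.replicate_succ]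
    · -- r' has no a: all zeros
      have hz : ∀ x ∈ r', x = 0 := by
        intro x hx
        rcases hr' x hx with h | h
        · exact h
        · exact absurd (h ▸ hx) haR
      obtain ⟨k, rfl⟩ : ∃ k, r' = List.replicate k 0 :=
        ⟨r'.length, List.eq_replicate_of_mem hz⟩
      refine ⟨n + 1, k + 1, by omega, Or.inl ?_⟩
      simp [List.replicate_succ]

/-- Existence core: under the structural consequences of pattern avoidance,
`decompAux` produces units with strictly increasing heads. -/
lemma decompAux_good : ∀ w : List ℕ,
    List.Pairwise (· ≤ ·) (w.filter (fun x => x != 0)) →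
    (∀ a : ℕ, a ≠ 0 → ¬ ([a,0,0,a] : List ℕ).Sublist w) →
    w.headD 1 ≠ 0 →
    (∀ u ∈ decompAux w, UnitAt u (u.headD 0)) ∧
      List.Chain' (fun u v => u.headD 0 < v.headD 0) (decompAux w) := by
  intro w
  induction w using decompAux.induct with
  | case1 => intro _ _ _; simp [decompAux]; exact List.IsChain.nil
  | case2 x xs ih =>
    intro hsort hno hx0
    have hx : x ≠ 0 := hx0
    have hvsub : (xs.dropWhile (bpred x)).Sublist (x :: xs) :=
      (List.dropWhile_sublist _).trans (List.sublist_cons_self _ _)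
    have hv0 : (xs.dropWhile (bpred x)).headD 1 ≠ 0 := by
      rcases hveq : xs.dropWhile (bpred x) with _ | ⟨b, v'⟩
      · simp
      · have hb := dropWhile_head_false hveq
        simp only [bpred, Bool.or_eq_false_iff, beq_eq_false_iff_ne] at hb
        simpa using hb.1
    have ihv := ih (List.Pairwise.sublist (hvsub.filter _) hsort)
      (fun a ha hs => hno a ha (hs.trans hvsub)) hv0
    have hu : UnitAt (x :: xs.takeWhile (bpred x)) x := by
      apply unit_of_shape hx
      · intro y hy
        have := List.mem_takeWhile_imp hy
        simp only [bpred, Bool.or_eq_true, beq_iff_eq] at this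
        tauto
      · intro hs
        exact hno x hx (hs.trans ((List.takeWhile_sublist _).cons₂ x))
    rw [decompAux]
    constructor
    · intro u hu'
      rcases List.mem_cons.mp hu' with rfl | h
      · simpa using hu
      · exact ihv.1 u h
    · rw [List.Chain', List.isChain_cons]
      refine ⟨?_, ihv.2⟩
      intro y hy
      rcases hveq : xs.dropWhile (bpred x) with _ | ⟨b, v'⟩
      · rw [hveq] at hy; simp [decompAux] at hy
      · rw [hveq, decompAux] at hy
        simp only [List.head?_cons, Option.mem_some_iff] at hy
        subst hy
        simp only [List.headD_cons]
        have hb := dropWhile_head_false hveq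
        simp only [bpred, Bool.or_eq_false_iff, beq_eq_false_iff_ne] at hb
        have hbmem : b ∈ xs :=
          (List.dropWhile_sublist (bpred x)).subset (by rw [hveq]; simp)
        have hble : x ≤ b := by
          have hfil : List.filter (fun x => x != 0) (x :: xs)
              = x :: List.filter (fun x => x != 0) xs := by
            simp [List.filter_cons, hx]
          rw [hfil, List.pairwise_cons] at hsort
          exact hsort.1 b (List.mem_filter.mpr ⟨hbmem, by simpa using hb.1⟩)
        have hbx : b ≠ x := hb.2
        omega

lemma ascN_zero {l : List ℕ} (h : ∀ x ∈ l, x = 0) : ascN l = 0 := by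
  unfold ascN
  rw [List.length_eq_zero_iff, List.filter_eq_nil_iff]
  rintro ⟨p1, p2⟩ hp
  have hmem := List.of_mem_zip hp
  have h1 := h p1 hmem.1
  have h2 := h p2 (List.mem_of_mem_tail hmem.2)
  simp [h1, h2]

lemma getD_append_cons : ∀ (l : List ℕ) (b : ℕ) (m : List ℕ),
    (l ++ b :: m).getD l.length 0 = b := by
  intro l
  induction l with
  | nil => intro b m; rfl
  | cons a l ih => intro b m; simpa [List.getD_cons_succ] using ih b m

lemma sorted_filter_of_avoids (t : List ℕ)
    (h2 : AvoidsPat (0 :: t) [0,2,1]) :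
    List.Pairwise (· ≤ ·) ((0 :: t).filter (fun x => x != 0)) := by
  rw [List.pairwise_iff_forall_sublist]
  intro x y hxy
  by_contra hlt
  push_neg at hlt
  have hx0 : x ≠ 0 := by
    have := List.of_mem_filter (hxy.subset (by simp : x ∈ [x, y]))
    simpa using this
  have hy0 : y ≠ 0 := by
    have := List.of_mem_filter (hxy.subset (by simp : y ∈ [x, y]))
    simpa using this
  have hsub : ([x, y] : List ℕ).Sublist (0 :: t) := hxy.trans List.filter_sublist
  have hsub' : ([x, y] : List ℕ).Sublist t := by
    cases hsub with
    | cons _ h => exact h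
    | cons_cons => exact absurd rfl hx0
  apply h2
  refine ⟨[0, x, y], hsub'.cons₂ 0, rfl, ?_⟩
  intro j k hj hk
  have hj' : j < 3 := by simpa using hj
  have hk' : k < 3 := by simpa using hk
  have hy : 0 < y := Nat.pos_of_ne_zero hy0
  interval_cases j <;> interval_cases k <;> simp [List.getD] <;> omega

lemma contains_1001 (π : List ℕ) (a : ℕ) (ha : a ≠ 0)
    (hs : ([a,0,0,a] : List ℕ).Sublist π) : ContainsPat π [1,0,0,1] := by
  refine ⟨[a,0,0,a], hs, rfl, ?_⟩
  intro j k hj hk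
  have hj' : j < 4 := by simpa using hj
  have hk' : k < 4 := by simpa using hk
  have ha' : 0 < a := Nat.pos_of_ne_zero ha
  interval_cases j <;> interval_cases k <;> simp [List.getD] <;> omega

lemma first_nonzero (t : List ℕ) (h1 : IsAscentSeq (0 :: t)) :
    (t.dropWhile (bpred 0)).headD 1 = 1 := by
  rcases hveq : t.dropWhile (bpred 0) with _ | ⟨b, r⟩
  · simp
  · simp only [List.headD_cons]
    have hb := dropWhile_head_false hveq
    have hb0 : b ≠ 0 := by
      simp only [bpred, Bool.or_self, beq_eq_false_iff_ne] at hb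
      exact hb
    obtain ⟨tw, htw, htwz⟩ : ∃ tw, t = tw ++ b :: r ∧ ∀ x ∈ tw, x = 0 := by
      refine ⟨t.takeWhile (bpred 0), ?_, ?_⟩
      · rw [← hveq]; exact List.takeWhile_append_dropWhile.symm
      · intro x hx
        have := List.mem_takeWhile_imp hx
        simpa [bpred] using this
    have hlt : tw.length + 1 < (0 :: t).length := by
      simp [htw]
    have hget : (0 :: t).getD (tw.length + 1) 0 = b := by
      rw [htw, List.getD_cons_succ, getD_append_cons]
    have htake : (0 :: t).take (tw.length + 1) = 0 :: tw := by
      rw [htw, List.take_succ_cons, List.take_left]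
    have hasc := h1.2 (tw.length + 1) (by omega) hlt
    rw [hget, htake, ascN_zero (by
      intro x hx
      rcases List.mem_cons.mp hx with rfl | h
      · rfl
      · exact htwz x h)] at hasc
    omega

lemma getElem_zero_eq_headD (L : List (List ℕ)) (h : 0 < L.length) :
    L[0] = L.headD [] := by
  cases L with
  | nil => simp at h
  | cons u L => rfl

end B1001

open B1001 in
/-- Unique decomposition of nonempty members of `B(1001)` into units. -/
theorem unique_decomposition_B1001 (π : List ℕ) (hne : π ≠ []) (h1 : IsAscentSeq π)
    (h2 : AvoidsPat π [0,2,1]) (h3 : AvoidsPat π [1,0,0,1]) :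
    ∃! L : List (List ℕ), π = L.flatten ∧ L ≠ [] ∧
      (∃ z : ℕ, 1 ≤ z ∧ L.headD [] = List.replicate z 0) ∧
      (∀ j, 1 ≤ j → j < L.length → UnitAt (L.getD j []) ((L.getD j []).headD 0)) ∧
      (1 < L.length → (L.getD 1 []).headD 0 = 1) ∧
      (∀ j, 1 ≤ j → j + 1 < L.length →
        (L.getD j []).headD 0 < (L.getD (j+1) []).headD 0) := by
  obtain ⟨t, rfl⟩ : ∃ t, π = 0 :: t := by
    have h0 := h1.1 hne
    cases π with
    | nil => exact absurd rfl hne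
    | cons a t =>
      simp only [List.headD_cons] at h0
      exact ⟨t, by rw [h0]⟩
  have hsort := sorted_filter_of_avoids t h2
  have hno : ∀ a : ℕ, a ≠ 0 → ¬ ([a,0,0,a] : List ℕ).Sublist (0 :: t) :=
    fun a ha hs => h3 (contains_1001 _ a ha hs)
  have hW : decompAux (0 :: t)
      = (0 :: t.takeWhile (bpred 0)) :: decompAux (t.dropWhile (bpred 0)) := by
    rw [decompAux]
  have hvsub : (t.dropWhile (bpred 0)).Sublist (0 :: t) :=
    (List.dropWhile_sublist _).trans (List.sublist_cons_self _ _)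
  have hv0 : (t.dropWhile (bpred 0)).headD 1 ≠ 0 := by
    rcases hveq : t.dropWhile (bpred 0) with _ | ⟨b, r⟩
    · simp
    · have hb := dropWhile_head_false hveq
      simp only [bpred, Bool.or_self, beq_eq_false_iff_ne] at hb
      simpa using hb
  have hgood := decompAux_good (t.dropWhile (bpred 0))
    (List.Pairwise.sublist (hvsub.filter _) hsort)
    (fun a ha hs => hno a ha (hs.trans hvsub)) hv0
  refine ⟨decompAux (0 :: t), ⟨(flatten_decompAux _).symm, by rw [hW]; simp, ?_, ?_, ?_, ?_⟩, ?_⟩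
  · -- first block is a run of zeros
    refine ⟨(t.takeWhile (bpred 0)).length + 1, by omega, ?_⟩
    rw [hW]
    simp only [List.headD_cons]
    rw [List.replicate_succ]
    congr 1
    apply List.eq_replicate_of_mem
    intro x hx
    have := List.mem_takeWhile_imp hx
    simpa [bpred] using this
  · -- units
    intro j hj1 hjlt
    obtain ⟨j', rfl⟩ : ∃ j', j = j' + 1 := ⟨j - 1, by omega⟩
    rw [hW] at hjlt ⊢
    rw [List.getD_cons_succ]
    simp only [List.length_cons] at hjlt
    have hj'' : j' < (decompAux (t.dropWhile (bpred 0))).length := by omega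
    rw [List.getD_eq_getElem _ _ hj'']
    exact hgood.1 _ (List.getElem_mem hj'')
  · -- second block head is 1
    intro hlen
    rw [hW]
    rw [hW] at hlen
    simp only [List.length_cons] at hlen
    rw [List.getD_cons_succ]
    have hDne : decompAux (t.dropWhile (bpred 0)) ≠ [] := by
      intro h
      rw [h] at hlen; simp at hlen
    have hvne : t.dropWhile (bpred 0) ≠ [] := by
      intro h
      rw [h] at hDne; simp [decompAux] at hDne
    have h0 : (decompAux (t.dropWhile (bpred 0))).getD 0 []
        = (decompAux (t.dropWhile (bpred 0))).headD [] := by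
      cases decompAux (t.dropWhile (bpred 0)) <;> rfl
    rw [h0, head_decompAux hvne]
    have := first_nonzero t h1
    rcases hveq : t.dropWhile (bpred 0) with _ | ⟨b, r⟩
    · exact absurd hveq hvne
    · rw [hveq] at this
      simpa using this
  · -- increasing heads
    intro j hj1 hjlt
    obtain ⟨j', rfl⟩ : ∃ j', j = j' + 1 := ⟨j - 1, by omega⟩
    rw [hW] at hjlt ⊢
    simp only [List.length_cons] at hjlt
    rw [List.getD_cons_succ, List.getD_cons_succ]
    have h1' : j' + 1 < (decompAux (t.dropWhile (bpred 0))).length := by omega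
    have h2' : j' < (decompAux (t.dropWhile (bpred 0))).length := by omega
    rw [List.getD_eq_getElem _ _ h2', List.getD_eq_getElem _ _ h1']
    have := List.isChain_iff_getElem.mp hgood.2 j' (by omega)
    simpa using this
  · -- uniqueness
    rintro L ⟨hfl, hLne, ⟨z, hz, hhead⟩, hunits, hone, hinc⟩
    have hblocks : ∀ u ∈ L, u ≠ [] ∧ ∀ x ∈ u, x = 0 ∨ x = u.headD 0 := by
      intro u hu
      obtain ⟨i, hi, rfl⟩ := List.mem_iff_getElem.mp hu
      rcases Nat.eq_zero_or_pos i with rfl | hipos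
      · rw [getElem_zero_eq_headD L (by omega), hhead]
        refine ⟨by simp [List.replicate_eq_nil_iff]; omega, ?_⟩
        intro x hx
        exact Or.inl (List.eq_of_mem_replicate hx)
      · have := hunits i hipos hi
        rw [List.getD_eq_getElem _ _ hi] at this
        obtain ⟨hne', hh, hmem⟩ := B1001.UnitAt.basic this
        exact ⟨hne', hmem⟩
    have hchain : List.Chain' (fun u v => u.headD 0 < v.headD 0) L := by
      rw [List.Chain', List.isChain_iff_getElem]
      intro i hi
      have hlen2 : i + 1 < L.length := by omega
      have hleni : i < L.length := by omega
      rw [← List.getD_eq_getElem L [] hleni, ← List.getD_eq_getElem L [] hlen2]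
      rcases Nat.eq_zero_or_pos i with rfl | hipos
      · have e0 : L.getD 0 [] = L.headD [] := by cases L <;> rfl
        rw [e0, hhead]
        simp only [Nat.zero_add]
        rw [hone (by omega)]
        cases z with
        | zero => omega
        | succ z => simp [List.replicate_succ]
      · exact hinc i hipos (by omega)
    have hLeq := decompAux_flatten_eq L hblocks hchain
    rw [← hfl] at hLeq
    exact hLeq.symm
end

section
/- Let b_{n,i} denote the number of ascent sequences π of length n avoiding {021, 0111} with asc(π) - max(π) = i. Then for n ≥ 3 and 0 ≤ i ≤ n-3, b_{n,i} = b_{n-1,i} + Σ_{j=i}^{n-3} (b_{n-1,j} + b_{n-2,j}) + [i > 0]·Σ_{d=1}^{n-i-2} Σ_{j=i-1}^{n-d-3} b_{n-d-2,j}, with b_{1,0} = 1, b_{2,0} = 2, b_{2,1} = 0, and b_{n,n-1} = b_{n,n-2} = 0 for n ≥ 3. -/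
open PowerSeries

/-- `b_{n,i}`: number of members of `B_n(0111)` with `asc(π) - max(π) = i`. -/
noncomputable def b0111 (n i : ℕ) : ℕ :=
  ({w : List ℕ | w.length = n ∧ IsAscentSeq w ∧ AvoidsPat w [0,2,1] ∧
      AvoidsPat w [0,1,1,1] ∧ ascN w = w.foldr max 0 + i}).ncard

namespace L7
open List

def Mx (w : List ℕ) : ℕ := w.foldr max 0

lemma Mx_cons (a : ℕ) (t : List ℕ) : Mx (a :: t) = max a (Mx t) := rfl

lemma mem_le_Mx {w : List ℕ} {a : ℕ} (h : a ∈ w) : a ≤ Mx w := by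
  induction w with
  | nil => simp at h
  | cons b t ih =>
    rcases List.mem_cons.1 h with h | h
    · simp [Mx_cons, h]
    · have := ih h; simp [Mx_cons]; omega

lemma Mx_mem {w : List ℕ} (h : 0 < Mx w) : Mx w ∈ w := by
  induction w with
  | nil => simp [Mx] at h
  | cons b t ih =>
    rw [Mx_cons]
    rcases le_total (Mx t) b with hb | hb
    · rw [max_eq_left hb]; exact List.mem_cons_self
    · rw [max_eq_right hb]
      rw [Mx_cons, max_eq_right hb] at h
      exact List.mem_cons_of_mem _ (ih h)

lemma Mx_snoc (w : List ℕ) (x : ℕ) : Mx (w ++ [x]) = max (Mx w) x := by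
  induction w with
  | nil => simp [Mx]
  | cons b t ih => simp only [List.cons_append, Mx_cons, ih]; omega

lemma Mx_eq_zero {w : List ℕ} (h : Mx w = 0) : ∀ a ∈ w, a = 0 := by
  intro a ha; have := mem_le_Mx ha; omega

def Lst (w : List ℕ) : ℕ := (w.getLast?).getD 0

lemma Lst_snoc (w : List ℕ) (x : ℕ) : Lst (w ++ [x]) = x := by
  simp [Lst, List.getLast?_concat]

lemma Lst_mem {w : List ℕ} (hw : w ≠ []) : Lst w ∈ w := by
  rw [Lst, List.getLast?_eq_getLast hw]
  exact List.getLast_mem hw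

lemma ascN_nil : ascN [] = 0 := rfl

lemma ascN_single (a : ℕ) : ascN [a] = 0 := rfl

lemma ascN_pair (a b : ℕ) : ascN [a, b] = if a < b then 1 else 0 := by
  by_cases h : a < b <;> simp [ascN, h]

lemma ascN_cons_cons (a b : ℕ) (l : List ℕ) :
    ascN (a :: b :: l) = (if a < b then 1 else 0) + ascN (b :: l) := by
  by_cases h : a < b <;> simp [ascN, List.filter_cons, h] <;> omega

lemma ascN_le (w : List ℕ) : ascN w ≤ w.tail.length := by
  unfold ascN
  calc ((w.zip w.tail).filter _).length ≤ (w.zip w.tail).length := List.length_filter_le _ _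
    _ ≤ w.tail.length := by rw [List.length_zip]; omega

lemma ascN_snoc {w : List ℕ} (hw : w ≠ []) (x : ℕ) :
    ascN (w ++ [x]) = ascN w + (if Lst w < x then 1 else 0) := by
  induction w with
  | nil => simp at hw
  | cons a t ih =>
    cases t with
    | nil => rw [show [a] ++ [x] = [a, x] by rfl, ascN_pair, ascN_single]
             simp [Lst]; by_cases h : a < x <;> simp [h]
    | cons b t' =>
      have h1 : (b :: t') ≠ [] := by simp
      have ih' := ih h1
      have h2 : Lst (a :: b :: t') = Lst (b :: t') := by
        simp [Lst, List.getLast?_cons_cons]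
      show ascN (a :: b :: (t' ++ [x])) = ascN (a :: b :: t') + _
      rw [ascN_cons_cons a b (t' ++ [x]), ascN_cons_cons a b t', h2,
        show (b :: (t' ++ [x])) = (b :: t') ++ [x] from rfl, ih']
      omega

lemma getD_append_lt (l l' : List ℕ) (n : ℕ) (h : n < l.length) :
    (l ++ l').getD n 0 = l.getD n 0 := by
  rw [List.getD_eq_getElem?_getD, List.getD_eq_getElem?_getD, List.getElem?_append_left h]

lemma getD_append_len (l : List ℕ) (x : ℕ) :
    (l ++ [x]).getD l.length 0 = x := by
  rw [List.getD_eq_getElem?_getD, List.getElem?_append_right (le_refl _)]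
  simp

lemma headD_append (w : List ℕ) (hw : w ≠ []) (x : ℕ) :
    (w ++ [x]).headD 0 = w.headD 0 := by
  cases w with
  | nil => simp at hw
  | cons a t => rfl

lemma isAsc_snoc {w : List ℕ} (hw : w ≠ []) (x : ℕ) :
    IsAscentSeq (w ++ [x]) ↔ IsAscentSeq w ∧ x ≤ ascN w + 1 := by
  have hlen : (w ++ [x]).length = w.length + 1 := by simp
  have hwl : 0 < w.length := List.length_pos_iff.2 hw
  constructor
  · rintro ⟨hh, hi⟩
    refine ⟨⟨fun _ => ?_, fun i hi0 hil => ?_⟩, ?_⟩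
    · rw [← headD_append w hw x]; exact hh (by simp)
    · have := hi i hi0 (by omega)
      rwa [getD_append_lt _ _ _ hil, List.take_append_of_le_length (by omega)] at this
    · have := hi w.length hwl (by omega)
      rwa [getD_append_len, List.take_append_of_le_length (le_refl _),
        List.take_length] at this
  · rintro ⟨⟨hh, hi⟩, hx⟩
    refine ⟨fun _ => ?_, fun i hi0 hil => ?_⟩
    · rw [headD_append w hw x]; exact hh hw
    · have hii : i < w.length ∨ i = w.length := by omega
      rcases hii with h | h
      · rw [getD_append_lt _ _ _ h, List.take_append_of_le_length (by omega)]
        exact hi i hi0 h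
      · rw [h, getD_append_len, List.take_append_of_le_length (le_refl _), List.take_length]
        exact hx

end L7

namespace L7
open List

def N1 (w : List ℕ) : Prop := w.Pairwise (fun a b => 0 < b → a ≤ b)
def N2 (w : List ℕ) : Prop := ∀ x : ℕ, 0 < x → w.count x ≤ 2

lemma avoids021_of_N1 {w : List ℕ} (h : N1 w) : AvoidsPat w [0,2,1] := by
  rintro ⟨s, hs, hlen, hrel⟩
  obtain ⟨s0, s1, s2, rfl⟩ : ∃ a b c, s = [a,b,c] := by
    match s, hlen with | [a,b,c], _ => exact ⟨a,b,c,rfl⟩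
  have r01 := (hrel 0 1 (by norm_num) (by norm_num)).1
  have r21 := (hrel 2 1 (by norm_num) (by norm_num)).1
  have r02 := (hrel 0 2 (by norm_num) (by norm_num)).1
  simp [List.getD_cons_zero, List.getD_cons_succ] at r01 r21 r02
  have h12 : [s1, s2].Sublist w := by
    refine List.Sublist.trans ?_ hs
    simp
  have hp := List.pairwise_iff_forall_sublist.1 h h12
  have : 0 < s2 := by omega
  have := hp this
  omega

lemma N1_of_avoids021 {t : List ℕ} (h : AvoidsPat (0 :: t) [0,2,1]) : N1 (0 :: t) := by
  rw [N1, List.pairwise_iff_forall_sublist]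
  intro a b hab
  by_contra hc
  push_neg at hc
  obtain ⟨hb, hba⟩ := hc
  have ha : 0 < a := lt_trans hb hba
  have h2 : [a,b].Sublist t := by
    cases hab with
    | cons _ h' => exact h'
    | cons_cons _ h' => omega
  refine h ⟨[0,a,b], h2.cons₂ 0, by simp, ?_⟩
  intro j k hj hk
  norm_num at hj hk
  interval_cases j <;> interval_cases k <;>
    simp [List.getD_cons_zero, List.getD_cons_succ] <;> omega

lemma avoids0111_of_N2 {w : List ℕ} (h : N2 w) : AvoidsPat w [0,1,1,1] := by
  rintro ⟨s, hs, hlen, hrel⟩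
  obtain ⟨s0, s1, s2, s3, rfl⟩ : ∃ a b c d, s = [a,b,c,d] := by
    match s, hlen with | [a,b,c,d], _ => exact ⟨a,b,c,d,rfl⟩
  have r01 := (hrel 0 1 (by norm_num) (by norm_num)).1
  have e12 := (hrel 1 2 (by norm_num) (by norm_num)).2
  have e13 := (hrel 1 3 (by norm_num) (by norm_num)).2
  simp [List.getD_cons_zero, List.getD_cons_succ] at r01 e12 e13
  have hs1 : 0 < s1 := by omega
  have hne : s1 ≠ s0 := by omega
  have hcount : List.count s1 [s0,s1,s2,s3] = 3 := by
    rw [← e12, ← e13]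
    simp [List.count_cons, hne, Ne.symm hne]
  have hle := hs.count_le s1
  have := h s1 hs1
  omega

lemma N2_of_avoids0111 {t : List ℕ} (h : AvoidsPat (0 :: t) [0,1,1,1]) : N2 (0 :: t) := by
  intro x hx
  by_contra hc
  push_neg at hc
  have hct : 3 ≤ List.count x t := by
    have : List.count x (0 :: t) = List.count x t := by
      rw [List.count_cons]
      simp [Nat.pos_iff_ne_zero.1 hx]
      omega
    omega
  have hrep : (List.replicate 3 x).Sublist t := List.replicate_sublist_iff.2 hct
  have hrep' : ([0,x,x,x] : List ℕ).Sublist (0 :: t) := by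
    have : List.replicate 3 x = [x,x,x] := rfl
    rw [this] at hrep
    exact hrep.cons₂ 0
  refine h ⟨[0,x,x,x], hrep', by simp, ?_⟩
  intro j k hj hk
  norm_num at hj hk
  interval_cases j <;> interval_cases k <;>
    simp [List.getD_cons_zero, List.getD_cons_succ] <;> omega

lemma char_avoids (t : List ℕ) :
    (AvoidsPat (0::t) [0,2,1] ∧ AvoidsPat (0::t) [0,1,1,1]) ↔ (N1 (0::t) ∧ N2 (0::t)) :=
  ⟨fun ⟨h1, h2⟩ => ⟨N1_of_avoids021 h1, N2_of_avoids0111 h2⟩,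
   fun ⟨h1, h2⟩ => ⟨avoids021_of_N1 h1, avoids0111_of_N2 h2⟩⟩

end L7

namespace L7
open List

def Stt (w : List ℕ) : Prop := (∃ t, w = 0 :: t) ∧ IsAscentSeq w ∧ N1 w ∧ N2 w

lemma Stt.ne_nil {w : List ℕ} (h : Stt w) : w ≠ [] := by
  obtain ⟨⟨t, rfl⟩, _⟩ := h; simp

lemma Stt_single : Stt [0] := by
  refine ⟨⟨[], rfl⟩, ⟨fun _ => rfl, fun i hi0 hil => by simp at hil; omega⟩, ?_, ?_⟩
  · exact List.pairwise_singleton _ _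
  · intro x hx
    have : List.count x [0] = 0 := List.count_eq_zero.2 (by simp; omega)
    omega

lemma Stt_drop {w : List ℕ} {x : ℕ} (h : Stt (w ++ [x])) (hw : w ≠ []) : Stt w := by
  obtain ⟨⟨t, ht⟩, hasc, h1, h2⟩ := h
  refine ⟨?_, ((isAsc_snoc hw x).1 hasc).1, ?_, ?_⟩
  · cases w with
    | nil => simp at hw
    | cons a t' =>
      refine ⟨t', ?_⟩
      have : a = 0 := by
        have := ht
        simp [List.cons_append] at this
        exact this.1
      rw [this]
  · exact h1.sublist (List.sublist_append_left w [x])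
  · intro y hy
    have := (List.sublist_append_left w [x]).count_le y
    have := h2 y hy
    omega

lemma Stt_snoc_facts {w : List ℕ} {x : ℕ} (h : Stt (w ++ [x])) (hw : w ≠ []) :
    x ≤ ascN w + 1 ∧ (x = 0 ∨ (Mx w ≤ x ∧ w.count x ≤ 1)) := by
  obtain ⟨⟨t, ht⟩, hasc, h1, h2⟩ := h
  refine ⟨((isAsc_snoc hw x).1 hasc).2, ?_⟩
  rcases Nat.eq_zero_or_pos x with hx | hx
  · exact Or.inl hx
  · refine Or.inr ⟨?_, ?_⟩
    · rcases Nat.eq_zero_or_pos (Mx w) with hm | hm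
      · omega
      · have hmem := Mx_mem hm
        have hsub : [Mx w, x].Sublist (w ++ [x]) := by
          have : [Mx w].Sublist w := List.singleton_sublist.2 hmem
          simpa using this.append (List.Sublist.refl [x])
        exact List.pairwise_iff_forall_sublist.1 h1 hsub hx
    · have := h2 x hx
      have : w.count x + 1 ≤ 2 := by
        have hc : (w ++ [x]).count x = w.count x + 1 := by
          simp [List.count_append]
        omega
      omega

lemma Stt_snoc_build {w : List ℕ} {x : ℕ} (h : Stt w) (hx : x ≤ ascN w + 1)
    (hleg : x = 0 ∨ (Mx w ≤ x ∧ w.count x ≤ 1)) : Stt (w ++ [x]) := by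
  obtain ⟨⟨t, ht⟩, hasc, h1, h2⟩ := h
  have hw : w ≠ [] := by rw [ht]; simp
  refine ⟨⟨t ++ [x], by rw [ht]; simp⟩, (isAsc_snoc hw x).2 ⟨hasc, hx⟩, ?_, ?_⟩
  · rw [N1, List.pairwise_append]
    refine ⟨h1, List.pairwise_singleton _ _, ?_⟩
    intro a ha b hb hbpos
    simp at hb
    subst hb
    rcases hleg with rfl | ⟨hm, _⟩
    · omega
    · exact le_trans (mem_le_Mx ha) hm
  · intro y hy
    rw [List.count_append]
    rcases eq_or_ne y x with rfl | hne
    · rcases hleg with rfl | ⟨_, hc⟩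
      · omega
      · simp; omega
    · simp [List.count_singleton, hne, Ne.symm hne]
      exact h2 y hy

lemma Lst_eq_Mx {w : List ℕ} (h1 : N1 w) (hw : w ≠ []) (hl : 0 < Lst w) :
    Lst w = Mx w := by
  have hle : Lst w ≤ Mx w := mem_le_Mx (Lst_mem hw)
  obtain ⟨w', L, rfl⟩ : ∃ w' L, w = w' ++ [L] := by
    rcases List.eq_nil_or_concat w with rfl | ⟨w', L, h⟩
    · simp at hw
    · exact ⟨w', L, by rw [h, List.concat_eq_append]⟩
  rw [Lst_snoc] at hl ⊢
  rw [Mx_snoc]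
  have hall : ∀ a ∈ w', a ≤ L := by
    intro a ha
    have hsub : [a, L].Sublist (w' ++ [L]) := by
      have : [a].Sublist w' := List.singleton_sublist.2 ha
      simpa using this.append (List.Sublist.refl [L])
    exact List.pairwise_iff_forall_sublist.1 h1 hsub hl
  have : Mx w' ≤ L := by
    rcases Nat.eq_zero_or_pos (Mx w') with hm | hm
    · omega
    · exact hall _ (Mx_mem hm)
  omega

lemma count_Mx_bounds {w : List ℕ} (h : Stt w) (hm : 0 < Mx w) :
    1 ≤ w.count (Mx w) ∧ w.count (Mx w) ≤ 2 := by
  obtain ⟨_, _, _, h2⟩ := h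
  exact ⟨List.count_pos_iff.2 (Mx_mem hm), h2 _ hm⟩

/-- the sets -/
def bSet (n i : ℕ) : Set (List ℕ) := {w | Stt w ∧ w.length = n ∧ ascN w = Mx w + i}
def SZ (n : ℕ) : Set (List ℕ) := {w | Stt w ∧ w.length = n ∧ Mx w = 0}
def SA (n j c : ℕ) : Set (List ℕ) :=
  {w | Stt w ∧ w.length = n ∧ 0 < Mx w ∧ Lst w = 0 ∧ ascN w = Mx w + j ∧ w.count (Mx w) = c}
def SB (n j c : ℕ) : Set (List ℕ) :=
  {w | Stt w ∧ w.length = n ∧ 0 < Mx w ∧ Lst w = Mx w ∧ ascN w = Mx w + j ∧ w.count (Mx w) = c}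
def SU (n j : ℕ) : Set (List ℕ) := {w | Stt w ∧ w.length = n ∧ Mx w + j ≤ ascN w}

/-- finiteness -/
lemma finite_bounded (n B : ℕ) : {w : List ℕ | w.length = n ∧ ∀ a ∈ w, a ≤ B}.Finite := by
  induction n with
  | zero =>
    apply Set.Finite.subset (Set.finite_singleton ([] : List ℕ))
    intro w ⟨hl, _⟩
    simp [List.length_eq_zero_iff.1 hl]
  | succ n ih =>
    apply Set.Finite.subset (Set.Finite.image (fun p : ℕ × List ℕ => p.1 :: p.2)
      (Set.Finite.prod (Set.finite_Iic B) ih))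
    rintro w ⟨hl, hb⟩
    cases w with
    | nil => simp at hl
    | cons a t =>
      refine ⟨(a, t), ⟨?_, ?_, ?_⟩, rfl⟩
      · exact hb a (by simp)
      · simpa using hl
      · intro y hy; exact hb y (by simp [hy])

lemma Stt_entry_le {w : List ℕ} (h : Stt w) : ∀ a ∈ w, a ≤ w.length := by
  obtain ⟨⟨t, rfl⟩, ⟨_, hi⟩, _, _⟩ := h
  intro a ha
  obtain ⟨i, hil, hget⟩ := List.mem_iff_getElem.1 ha
  rcases Nat.eq_zero_or_pos i with rfl | hi0
  · simp at hget; omega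
  · have hD : (0 :: t).getD i 0 = a := by
      rw [List.getD_eq_getElem _ _ hil, hget]
    have := hi i hi0 hil
    rw [hD] at this
    have h2 : ascN ((0 :: t).take i) ≤ i - 1 := by
      have := ascN_le ((0 :: t).take i)
      have hlt : ((0 :: t).take i).length ≤ i := by simp
      have : ((0 :: t).take i).tail.length ≤ i - 1 := by
        rw [List.length_tail]; omega
      omega
    omega

lemma finite_sub {s : Set (List ℕ)} (n : ℕ) (hs : ∀ w ∈ s, Stt w ∧ w.length = n) :
    s.Finite := by
  apply Set.Finite.subset (finite_bounded n n)
  intro w hw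
  obtain ⟨h1, h2⟩ := hs w hw
  exact ⟨h2, fun a ha => h2 ▸ Stt_entry_le h1 a ha⟩

lemma bSet_finite (n i : ℕ) : (bSet n i).Finite :=
  finite_sub n (fun w hw => ⟨hw.1, hw.2.1⟩)
lemma SZ_finite (n : ℕ) : (SZ n).Finite := finite_sub n (fun w hw => ⟨hw.1, hw.2.1⟩)
lemma SA_finite (n j c : ℕ) : (SA n j c).Finite := finite_sub n (fun w hw => ⟨hw.1, hw.2.1⟩)
lemma SB_finite (n j c : ℕ) : (SB n j c).Finite := finite_sub n (fun w hw => ⟨hw.1, hw.2.1⟩)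
lemma SU_finite (n j : ℕ) : (SU n j).Finite := finite_sub n (fun w hw => ⟨hw.1, hw.2.1⟩)

end L7

namespace L7
open List

lemma Mx_le_bound {w : List ℕ} {B : ℕ} (h : ∀ a ∈ w, a ≤ B) : Mx w ≤ B := by
  induction w with
  | nil => simp [Mx]
  | cons a t ih =>
    rw [Mx_cons]
    have := h a (by simp)
    have := ih (fun b hb => h b (by simp [hb]))
    omega

lemma ascN_zero_of_Mx_zero {w : List ℕ} (h : Mx w = 0) : ascN w = 0 := by
  unfold ascN
  rw [List.length_eq_zero_iff]
  rw [List.filter_eq_nil_iff]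
  rintro ⟨a, b⟩ hab
  have hb : b ∈ w.tail := (List.of_mem_zip hab).2
  have : b ∈ w := (List.tail_sublist w).subset hb
  have := Mx_eq_zero h b this
  simp; omega

lemma Lst_le_Mx {w : List ℕ} (hw : w ≠ []) : Lst w ≤ Mx w := mem_le_Mx (Lst_mem hw)

lemma Mx_le_ascN {w : List ℕ} (h : Stt w) : Mx w ≤ ascN w := by
  obtain ⟨n, hn⟩ : ∃ n, w.length = n := ⟨w.length, rfl⟩
  induction n generalizing w with
  | zero => exact absurd (List.length_eq_zero_iff.1 hn) h.ne_nil
  | succ n ih =>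
    rcases List.eq_nil_or_concat w with rfl | ⟨u, x, rfl⟩
    · exact absurd rfl h.ne_nil
    rw [List.concat_eq_append] at *
    rcases Nat.eq_zero_or_pos n with rfl | hn1
    · have hu0 : u = [] := by
        rw [List.length_append] at hn; simp at hn; exact hn
      subst hu0
      obtain ⟨⟨t, ht⟩, _⟩ := h
      simp at ht
      obtain ⟨rfl, rfl⟩ := ht
      simp [Mx, ascN]
    · have hu : u ≠ [] := by
        rw [List.length_append] at hn; simp at hn
        intro hc; rw [hc] at hn; simp at hn; omega
      have hsu : Stt u := Stt_drop h hu
      have hul : u.length = n := by rw [List.length_append] at hn; simp at hn; omega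
      have ihu := ih hsu hul
      have hfacts := Stt_snoc_facts h hu
      rw [Mx_snoc, ascN_snoc hu]
      rcases le_or_gt x (Mx u) with hx | hx
      · have : max (Mx u) x = Mx u := max_eq_left hx
        omega
      · have hLst : Lst u < x := lt_of_le_of_lt (Lst_le_Mx hu) hx
        rw [if_pos hLst]
        have : max (Mx u) x = x := max_eq_right (le_of_lt hx)
        omega

lemma replicate_mem_SZ (n : ℕ) (hn : 1 ≤ n) : List.replicate n 0 ∈ SZ n := by
  have hMx : Mx (List.replicate n 0) = 0 := by
    have := Mx_le_bound (B := 0) (w := List.replicate n 0)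
      (fun a ha => by rw [List.eq_of_mem_replicate ha])
    omega
  refine ⟨⟨?_, ?_, ?_, ?_⟩, by simp, hMx⟩
  · obtain ⟨m, rfl⟩ : ∃ m, n = m + 1 := ⟨n - 1, by omega⟩
    exact ⟨List.replicate m 0, rfl⟩
  · constructor
    · intro _
      obtain ⟨m, rfl⟩ : ∃ m, n = m + 1 := ⟨n - 1, by omega⟩
      rfl
    · intro i hi0 hil
      have : (List.replicate n 0).getD i 0 = 0 := by
        rw [List.getD_eq_getElem _ _ (by simpa using hil)]
        simp
      omega
  · rw [N1]
    rw [List.pairwise_replicate]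
    right; omega
  · intro x hx
    have : x ∉ List.replicate n 0 := by
      intro hc
      have := List.eq_of_mem_replicate hc
      omega
    rw [List.count_eq_zero.2 this]
    omega

lemma SZ_eq (n : ℕ) (hn : 1 ≤ n) : SZ n = {List.replicate n 0} := by
  ext w
  constructor
  · rintro ⟨hs, hlen, hMx⟩
    have : w = List.replicate n 0 := by
      rw [List.eq_replicate_iff]
      exact ⟨hlen, Mx_eq_zero hMx⟩
    simp [this]
  · rintro rfl
    exact replicate_mem_SZ n hn

lemma SZ_ncard (n : ℕ) (hn : 1 ≤ n) : (SZ n).ncard = 1 := by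
  rw [SZ_eq n hn]; simp

/-- decomposition of a nonempty-prefix word -/
lemma decomp {w' : List ℕ} {n : ℕ} (h : Stt w') (hl : w'.length = n + 1) (hn : 1 ≤ n) :
    ∃ u, w' = u ++ [Lst w'] ∧ u.length = n ∧ Stt u ∧
      ascN w' = ascN u + (if Lst u < Lst w' then 1 else 0) ∧
      Mx w' = max (Mx u) (Lst w') := by
  rcases List.eq_nil_or_concat w' with rfl | ⟨u, x, hux⟩
  · exact absurd rfl h.ne_nil
  rw [List.concat_eq_append] at hux
  subst hux
  have hul : u.length = n := by rw [List.length_append] at hl; simp at hl; omega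
  have hu : u ≠ [] := by
    intro hc; rw [hc] at hul; simp at hul; omega
  rw [Lst_snoc]
  exact ⟨u, rfl, hul, Stt_drop h hu, ascN_snoc hu x, Mx_snoc u x⟩

lemma snoc_injOn (g : List ℕ → ℕ) (s : Set (List ℕ)) :
    Set.InjOn (fun w => w ++ [g w]) s := by
  intro a _ b _ h
  have := congrArg List.dropLast h
  simpa using this

/-- SA recurrence -/
lemma SA_eq (n j c : ℕ) (hn : 1 ≤ n) :
    SA (n+1) j c = (fun w => w ++ [(0:ℕ)]) '' (SA n j c ∪ SB n j c) := by
  ext w'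
  constructor
  · rintro ⟨hs, hlen, hMx, hLst, hasc, hcnt⟩
    obtain ⟨u, hdec, hul, hsu, hascd, hMxd⟩ := decomp hs hlen hn
    rw [hLst] at hdec hascd hMxd
    have hMxu : Mx u = Mx w' := by rw [hMxd]; omega
    have hasc' : ascN u = Mx u + j := by
      rw [hMxu]
      have : ¬ (Lst u < 0) := by omega
      rw [if_neg this] at hascd
      omega
    have hcnt' : u.count (Mx u) = c := by
      have h0 : Mx w' ≠ 0 := by omega
      have h1 : List.count (Mx w') [0] = 0 := List.count_eq_zero.2 (by simpa using h0)
      have h2 : List.count (Mx w') w' = List.count (Mx w') u := by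
        set m := Mx w' with hm
        conv_lhs => rw [hdec]
        rw [List.count_append, h1]
        omega
      rw [hMxu]
      omega
    have hMxu0 : 0 < Mx u := by omega
    have hLstu : Lst u = 0 ∨ Lst u = Mx u := by
      rcases Nat.eq_zero_or_pos (Lst u) with h0 | hpos
      · exact Or.inl h0
      · exact Or.inr (Lst_eq_Mx hsu.2.2.1 hsu.ne_nil hpos)
    refine ⟨u, ?_, hdec.symm⟩
    rcases hLstu with h0 | hM
    · exact Or.inl ⟨hsu, hul, hMxu0, h0, hasc', hcnt'⟩
    · exact Or.inr ⟨hsu, hul, hMxu0, hM, hasc', hcnt'⟩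
  · rintro ⟨u, hu, rfl⟩
    show u ++ [0] ∈ SA (n+1) j c
    have hsu : Stt u := by rcases hu with h | h <;> exact h.1
    have husp : u.length = n ∧ 0 < Mx u ∧ ascN u = Mx u + j ∧ u.count (Mx u) = c := by
      rcases hu with ⟨_, h2, h3, _, h5, h6⟩ | ⟨_, h2, h3, _, h5, h6⟩ <;> exact ⟨h2, h3, h5, h6⟩
    obtain ⟨hul, hMxu, hascu, hcntu⟩ := husp
    have hst : Stt (u ++ [0]) := Stt_snoc_build hsu (by omega) (Or.inl rfl)
    have hMx' : Mx (u ++ [0]) = Mx u := by rw [Mx_snoc]; omega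
    refine ⟨hst, by simp [hul], by rw [hMx']; omega, Lst_snoc u 0, ?_, ?_⟩
    · rw [ascN_snoc hsu.ne_nil, hMx']
      have : ¬ (Lst u < 0) := by omega
      rw [if_neg this]
      omega
    · rw [hMx', List.count_append]
      have : Mx u ≠ 0 := by omega
      rw [List.count_eq_zero.2 (show Mx u ∉ [0] by simpa using this), Nat.add_zero]
      exact hcntu

/-- SB c=1 recurrence -/
lemma SB1_eq (n j : ℕ) (hn : 1 ≤ n) :
    SB (n+1) j 1 = (fun w => w ++ [ascN w + 1 - j]) '' (SU n j) := by
  ext w'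
  constructor
  · rintro ⟨hs, hlen, hMx, hLst, hasc, hcnt⟩
    obtain ⟨u, hdec, hul, hsu, hascd, hMxd⟩ := decomp hs hlen hn
    set x := Lst w' with hx
    have hxM : x = Mx w' := hLst.symm ▸ rfl
    have hcntu : u.count x = 0 := by
      have h1 : w'.count x = u.count x + 1 := by
        conv_lhs => rw [hdec]
        rw [List.count_append]; simp
      have h2 := hcnt
      rw [← hxM] at h2
      omega
    have hxnotmem : x ∉ u := List.count_eq_zero.1 hcntu
    have hMxu_lt : Mx u < x := by
      have h1 : Mx u ≤ x := by rw [hMxd] at hxM; omega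
      rcases lt_or_eq_of_le h1 with h | h
      · exact h
      · exfalso
        apply hxnotmem
        rw [← h]
        exact Mx_mem (by omega)
    have hascent : ascN w' = ascN u + 1 := by
      rw [hascd, if_pos (lt_of_le_of_lt (Lst_le_Mx hsu.ne_nil) hMxu_lt)]
    have hxeq : x = ascN u + 1 - j := by omega
    have hSU : u ∈ SU n j := ⟨hsu, hul, by omega⟩
    refine ⟨u, hSU, ?_⟩
    show u ++ [ascN u + 1 - j] = w'
    rw [← hxeq]
    exact hdec.symm
  · rintro ⟨u, ⟨hsu, hul, hA⟩, rfl⟩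
    show u ++ [ascN u + 1 - j] ∈ SB (n+1) j 1
    set x := ascN u + 1 - j with hx
    have hxgt : Mx u < x := by omega
    have hxle : x ≤ ascN u + 1 := by omega
    have hxnotmem : x ∉ u := fun hc => absurd (mem_le_Mx hc) (by omega)
    have hst : Stt (u ++ [x]) := Stt_snoc_build hsu hxle
      (Or.inr ⟨le_of_lt hxgt, by rw [List.count_eq_zero.2 hxnotmem]; omega⟩)
    have hMx' : Mx (u ++ [x]) = x := by rw [Mx_snoc]; omega
    have hasc' : ascN (u ++ [x]) = ascN u + 1 := by
      rw [ascN_snoc hsu.ne_nil, if_pos (lt_of_le_of_lt (Lst_le_Mx hsu.ne_nil) hxgt)]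
    refine ⟨hst, by simp [hul], by rw [hMx']; omega, by rw [Lst_snoc, hMx'], ?_, ?_⟩
    · rw [hasc', hMx']; omega
    · rw [hMx', List.count_append, List.count_eq_zero.2 hxnotmem]; simp

lemma SB2_sub {n j : ℕ} (hn : 1 ≤ n) {w' : List ℕ} (h : w' ∈ SB (n+1) j 2) :
    ∃ u, w' = u ++ [Mx u] ∧ (u ∈ SB n j 1 ∨ (1 ≤ j ∧ u ∈ SA n (j-1) 1)) := by
  obtain ⟨hs, hlen, hMx, hLst, hasc, hcnt⟩ := h
  obtain ⟨u, hdec, hul, hsu, hascd, hMxd⟩ := decomp hs hlen hn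
  have hcnt_u : u.count (Mx w') = 1 := by
    have h1 : List.count (Mx w') [Lst w'] = 1 := by
      rw [hLst]; simp
    have h2 : List.count (Mx w') w' = List.count (Mx w') u + 1 := by
      set m := Mx w' with hm
      conv_lhs => rw [hdec]
      rw [List.count_append, h1]
    omega
  have hmem : Mx w' ∈ u := List.count_pos_iff.1 (by omega)
  have hMxu : Mx u = Mx w' := by
    have h1 : Mx w' ≤ Mx u := mem_le_Mx hmem
    rw [hLst] at hMxd
    omega
  have hLstu : Lst u = 0 ∨ Lst u = Mx u :=
    (Nat.eq_zero_or_pos (Lst u)).imp id (fun hpos => Lst_eq_Mx hsu.2.2.1 hsu.ne_nil hpos)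
  refine ⟨u, by rw [hMxu, ← hLst]; exact hdec, ?_⟩
  rcases hLstu with h0 | hM
  · -- Lst u = 0 : ascent happened, source is SA with pjum j-1, j ≥ 1
    have hstep : Lst u < Lst w' := by rw [h0, hLst]; omega
    rw [if_pos hstep] at hascd
    have hML : Mx u ≤ ascN u := Mx_le_ascN hsu
    have hj : 1 ≤ j := by omega
    refine Or.inr ⟨hj, hsu, hul, by omega, h0, by omega, by rw [hMxu]; omega⟩
  · -- Lst u = Mx u : no ascent, source is SB
    have hstep : ¬ (Lst u < Lst w') := by rw [hM, hLst, hMxu]; omega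
    rw [if_neg hstep] at hascd
    refine Or.inl ⟨hsu, hul, by omega, hM, by omega, by rw [hMxu]; omega⟩

lemma SB2_buildB {n j : ℕ} {u : List ℕ} (hu : u ∈ SB n j 1) :
    u ++ [Mx u] ∈ SB (n+1) j 2 := by
  obtain ⟨hsu, hul, hMxu, hLstu, hascu, hcntu⟩ := hu
  have hML : Mx u ≤ ascN u := Mx_le_ascN hsu
  have hst : Stt (u ++ [Mx u]) :=
    Stt_snoc_build hsu (by omega) (Or.inr ⟨le_refl _, by omega⟩)
  have hMx' : Mx (u ++ [Mx u]) = Mx u := by rw [Mx_snoc]; omega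
  have hasc' : ascN (u ++ [Mx u]) = ascN u := by
    rw [ascN_snoc hsu.ne_nil, if_neg (by rw [hLstu]; omega)]
    omega
  refine ⟨hst, by simp [hul], by rw [hMx']; omega, by rw [Lst_snoc, hMx'], ?_, ?_⟩
  · rw [hasc', hMx']; omega
  · rw [hMx', List.count_append]
    simp
    omega

lemma SB2_buildA {n j : ℕ} {u : List ℕ} (hj : 1 ≤ j) (hu : u ∈ SA n (j-1) 1) :
    u ++ [Mx u] ∈ SB (n+1) j 2 := by
  obtain ⟨hsu, hul, hMxu, hLstu, hascu, hcntu⟩ := hu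
  have hML : Mx u ≤ ascN u := Mx_le_ascN hsu
  have hst : Stt (u ++ [Mx u]) :=
    Stt_snoc_build hsu (by omega) (Or.inr ⟨le_refl _, by omega⟩)
  have hMx' : Mx (u ++ [Mx u]) = Mx u := by rw [Mx_snoc]; omega
  have hasc' : ascN (u ++ [Mx u]) = ascN u + 1 := by
    rw [ascN_snoc hsu.ne_nil, if_pos (by rw [hLstu]; omega)]
  refine ⟨hst, by simp [hul], by rw [hMx']; omega, by rw [Lst_snoc, hMx'], ?_, ?_⟩
  · rw [hasc', hMx']; omega
  · rw [hMx', List.count_append]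
    simp
    omega

/-- SB c=2 recurrence, j = 0 -/
lemma SB2_eq_zero (n : ℕ) (hn : 1 ≤ n) :
    SB (n+1) 0 2 = (fun w => w ++ [Mx w]) '' (SB n 0 1) := by
  ext w'
  constructor
  · intro h
    obtain ⟨u, hdec, hcase⟩ := SB2_sub hn h
    rcases hcase with hB | ⟨hj, _⟩
    · exact ⟨u, hB, hdec.symm⟩
    · omega
  · rintro ⟨u, hu, rfl⟩
    exact SB2_buildB hu

/-- SB c=2 recurrence, j ≥ 1 -/
lemma SB2_eq_pos (n j : ℕ) (hn : 1 ≤ n) (hj : 1 ≤ j) :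
    SB (n+1) j 2 = (fun w => w ++ [Mx w]) '' (SA n (j-1) 1 ∪ SB n j 1) := by
  ext w'
  constructor
  · intro h
    obtain ⟨u, hdec, hcase⟩ := SB2_sub hn h
    rcases hcase with hB | ⟨_, hA⟩
    · exact ⟨u, Or.inr hB, hdec.symm⟩
    · exact ⟨u, Or.inl hA, hdec.symm⟩
  · rintro ⟨u, hu, rfl⟩
    rcases hu with hA | hB
    · exact SB2_buildA hj hA
    · exact SB2_buildB hB

/-- SU split -/
lemma SU_split (n j : ℕ) : SU n j = bSet n j ∪ SU n (j+1) := by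
  ext w
  constructor
  · rintro ⟨hs, hl, hA⟩
    rcases eq_or_lt_of_le hA with h | h
    · exact Or.inl ⟨hs, hl, h.symm⟩
    · exact Or.inr ⟨hs, hl, by omega⟩
  · rintro (⟨hs, hl, h⟩ | ⟨hs, hl, h⟩)
    · exact ⟨hs, hl, by omega⟩
    · exact ⟨hs, hl, by omega⟩

lemma ascN_lt_len {w : List ℕ} (hw : w ≠ []) : ascN w < w.length := by
  have := ascN_le w
  have : w.tail.length = w.length - 1 := by rw [List.length_tail]
  have hpos : 0 < w.length := List.length_pos_iff.2 hw
  have := ascN_le w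
  omega

lemma SU_empty {n j : ℕ} (h : n ≤ j) : SU n j = ∅ := by
  ext w
  simp only [SU, Set.mem_setOf_eq, Set.mem_empty_iff_false, iff_false]
  rintro ⟨hs, hl, hA⟩
  have := ascN_lt_len hs.ne_nil
  omega

lemma bSet_empty_ge {n j : ℕ} (h : n ≤ j) : bSet n j = ∅ := by
  ext w
  simp only [bSet, Set.mem_setOf_eq, Set.mem_empty_iff_false, iff_false]
  rintro ⟨hs, hl, hA⟩
  have := ascN_lt_len hs.ne_nil
  omega

end L7

namespace L7
open List

noncomputable def bb (n i : ℕ) : ℕ := (bSet n i).ncard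
noncomputable def sa (n j c : ℕ) : ℕ := (SA n j c).ncard
noncomputable def sb (n j c : ℕ) : ℕ := (SB n j c).ncard
noncomputable def su (n j : ℕ) : ℕ := (SU n j).ncard

lemma dAB {n j j' c c' : ℕ} : Disjoint (SA n j c) (SB n j' c') := by
  rw [Set.disjoint_left]
  rintro w ⟨_, _, hM, hL, _, _⟩ ⟨_, _, hM', hL', _, _⟩
  omega

lemma dA12 {n j j' : ℕ} : Disjoint (SA n j 1) (SA n j' 2) := by
  rw [Set.disjoint_left]
  rintro w ⟨_, _, _, _, _, hc⟩ ⟨_, _, _, _, _, hc'⟩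
  omega

lemma dB12 {n j j' : ℕ} : Disjoint (SB n j 1) (SB n j' 2) := by
  rw [Set.disjoint_left]
  rintro w ⟨_, _, _, _, _, hc⟩ ⟨_, _, _, _, _, hc'⟩
  omega

lemma dZA {n n' j c : ℕ} : Disjoint (SZ n) (SA n' j c) := by
  rw [Set.disjoint_left]
  rintro w ⟨_, _, hM⟩ ⟨_, _, hM', _, _, _⟩
  omega

lemma dZB {n n' j c : ℕ} : Disjoint (SZ n) (SB n' j c) := by
  rw [Set.disjoint_left]
  rintro w ⟨_, _, hM⟩ ⟨_, _, hM', _, _, _⟩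
  omega

lemma snoc_injOn' (g : List ℕ → ℕ) (s : Set (List ℕ)) :
    Set.InjOn (fun w => w ++ [g w]) s := by
  intro a _ b _ h
  have := congrArg List.dropLast h
  simpa using this

/-- partition of bSet -/
lemma bSet_subset_parts {n i : ℕ} {w : List ℕ} (h : w ∈ bSet n i) :
    w ∈ SZ n ∪ (SA n i 1 ∪ (SA n i 2 ∪ (SB n i 1 ∪ SB n i 2))) := by
  obtain ⟨hs, hl, ha⟩ := h
  rcases Nat.eq_zero_or_pos (Mx w) with hM | hM
  · exact Or.inl ⟨hs, hl, hM⟩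
  · right
    have hLst : Lst w = 0 ∨ Lst w = Mx w :=
      (Nat.eq_zero_or_pos (Lst w)).imp id (fun hpos => Lst_eq_Mx hs.2.2.1 hs.ne_nil hpos)
    obtain ⟨hc1, hc2⟩ := count_Mx_bounds hs hM
    have hcc : w.count (Mx w) = 1 ∨ w.count (Mx w) = 2 := by omega
    rcases hLst with hL | hL
    · rcases hcc with hc | hc
      · exact Or.inl ⟨hs, hl, hM, hL, ha, hc⟩
      · exact Or.inr (Or.inl ⟨hs, hl, hM, hL, ha, hc⟩)
    · rcases hcc with hc | hc
      · exact Or.inr (Or.inr (Or.inl ⟨hs, hl, hM, hL, ha, hc⟩))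
      · exact Or.inr (Or.inr (Or.inr ⟨hs, hl, hM, hL, ha, hc⟩))

lemma bSet_eq_parts_pos {n i : ℕ} (hi : 0 < i) :
    bSet n i = SA n i 1 ∪ (SA n i 2 ∪ (SB n i 1 ∪ SB n i 2)) := by
  ext w
  constructor
  · intro h
    rcases bSet_subset_parts h with hZ | hr
    · exfalso
      obtain ⟨hs, hl, hM⟩ := hZ
      have := ascN_zero_of_Mx_zero hM
      obtain ⟨_, _, ha⟩ := h
      omega
    · exact hr
  · rintro (⟨hs, hl, _, _, ha, _⟩ | (⟨hs, hl, _, _, ha, _⟩ | (⟨hs, hl, _, _, ha, _⟩ | ⟨hs, hl, _, _, ha, _⟩))) <;>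
      exact ⟨hs, hl, ha⟩

lemma bSet_eq_parts_zero {n : ℕ} :
    bSet n 0 = SZ n ∪ (SA n 0 1 ∪ (SA n 0 2 ∪ (SB n 0 1 ∪ SB n 0 2))) := by
  ext w
  constructor
  · exact bSet_subset_parts
  · rintro (⟨hs, hl, hM⟩ | (⟨hs, hl, _, _, ha, _⟩ | (⟨hs, hl, _, _, ha, _⟩ | (⟨hs, hl, _, _, ha, _⟩ | ⟨hs, hl, _, _, ha, _⟩)))) <;>
      refine ⟨hs, hl, ?_⟩
    · rw [ascN_zero_of_Mx_zero hM, hM]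
    all_goals exact ha

lemma bb_split_pos {n i : ℕ} (hi : 0 < i) :
    bb n i = sa n i 1 + (sa n i 2 + (sb n i 1 + sb n i 2)) := by
  rw [bb, bSet_eq_parts_pos hi]
  have d1 : Disjoint (SA n i 1) (SA n i 2 ∪ (SB n i 1 ∪ SB n i 2)) :=
    Set.disjoint_union_right.2 ⟨dA12, Set.disjoint_union_right.2 ⟨dAB, dAB⟩⟩
  have d2 : Disjoint (SA n i 2) (SB n i 1 ∪ SB n i 2) :=
    Set.disjoint_union_right.2 ⟨dAB, dAB⟩
  rw [Set.ncard_union_eq d1 (SA_finite _ _ _)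
      ((SA_finite _ _ _).union ((SB_finite _ _ _).union (SB_finite _ _ _))),
    Set.ncard_union_eq d2 (SA_finite _ _ _) ((SB_finite _ _ _).union (SB_finite _ _ _)),
    Set.ncard_union_eq dB12 (SB_finite _ _ _) (SB_finite _ _ _)]
  rfl

lemma bb_split_zero {n : ℕ} (hn : 1 ≤ n) :
    bb n 0 = 1 + (sa n 0 1 + (sa n 0 2 + (sb n 0 1 + sb n 0 2))) := by
  rw [bb, bSet_eq_parts_zero]
  have d0 : Disjoint (SZ n) (SA n 0 1 ∪ (SA n 0 2 ∪ (SB n 0 1 ∪ SB n 0 2))) :=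
    Set.disjoint_union_right.2 ⟨dZA,
      Set.disjoint_union_right.2 ⟨dZA, Set.disjoint_union_right.2 ⟨dZB, dZB⟩⟩⟩
  have d1 : Disjoint (SA n 0 1) (SA n 0 2 ∪ (SB n 0 1 ∪ SB n 0 2)) :=
    Set.disjoint_union_right.2 ⟨dA12, Set.disjoint_union_right.2 ⟨dAB, dAB⟩⟩
  have d2 : Disjoint (SA n 0 2) (SB n 0 1 ∪ SB n 0 2) :=
    Set.disjoint_union_right.2 ⟨dAB, dAB⟩
  rw [Set.ncard_union_eq d0 (SZ_finite _)
      ((SA_finite _ _ _).union ((SA_finite _ _ _).union ((SB_finite _ _ _).union (SB_finite _ _ _)))),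
    Set.ncard_union_eq d1 (SA_finite _ _ _)
      ((SA_finite _ _ _).union ((SB_finite _ _ _).union (SB_finite _ _ _))),
    Set.ncard_union_eq d2 (SA_finite _ _ _) ((SB_finite _ _ _).union (SB_finite _ _ _)),
    Set.ncard_union_eq dB12 (SB_finite _ _ _) (SB_finite _ _ _),
    SZ_ncard n hn]
  rfl

/-- numeric recurrences -/
lemma sa_rec (n j c : ℕ) (hn : 1 ≤ n) : sa (n+1) j c = sa n j c + sb n j c := by
  rw [sa, SA_eq n j c hn, Set.ncard_image_of_injOn (snoc_injOn' (fun _ => 0) _),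
    Set.ncard_union_eq dAB (SA_finite _ _ _) (SB_finite _ _ _)]
  rfl

lemma sb1_rec (n j : ℕ) (hn : 1 ≤ n) : sb (n+1) j 1 = su n j := by
  rw [sb, SB1_eq n j hn, Set.ncard_image_of_injOn (snoc_injOn' (fun w => ascN w + 1 - j) _)]
  rfl

lemma sb2_rec0 (n : ℕ) (hn : 1 ≤ n) : sb (n+1) 0 2 = sb n 0 1 := by
  rw [sb, SB2_eq_zero n hn, Set.ncard_image_of_injOn (snoc_injOn' Mx _)]
  rfl

lemma sb2_recp (n j : ℕ) (hn : 1 ≤ n) (hj : 1 ≤ j) :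
    sb (n+1) j 2 = sa n (j-1) 1 + sb n j 1 := by
  rw [sb, SB2_eq_pos n j hn hj, Set.ncard_image_of_injOn (snoc_injOn' Mx _),
    Set.ncard_union_eq dAB (SA_finite _ _ _) (SB_finite _ _ _)]
  rfl

lemma su_rec (n j : ℕ) : su n j = bb n j + su n (j+1) := by
  have d : Disjoint (bSet n j) (SU n (j+1)) := by
    rw [Set.disjoint_left]
    rintro w ⟨_, _, ha⟩ ⟨_, _, ha'⟩
    omega
  rw [su, SU_split n j, Set.ncard_union_eq d (bSet_finite _ _) (SU_finite _ _)]
  rfl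

lemma su_zero {n j : ℕ} (h : n ≤ j) : su n j = 0 := by
  rw [su, SU_empty h, Set.ncard_empty]

lemma bb_zero_ge {n j : ℕ} (h : n ≤ j) : bb n j = 0 := by
  rw [bb, bSet_empty_ge h, Set.ncard_empty]

/-- small-length emptiness -/
lemma Stt_len1 {w : List ℕ} (hs : Stt w) (hl : w.length = 1) : w = [0] := by
  obtain ⟨⟨t, rfl⟩, _⟩ := hs
  simp at hl
  rw [hl]

lemma SA1_empty (j c : ℕ) : SA 1 j c = ∅ := by
  ext w
  simp only [SA, Set.mem_setOf_eq, Set.mem_empty_iff_false, iff_false]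
  rintro ⟨hs, hl, hM, _⟩
  rw [Stt_len1 hs hl] at hM
  simp [Mx] at hM

lemma SB1_empty (j c : ℕ) : SB 1 j c = ∅ := by
  ext w
  simp only [SB, Set.mem_setOf_eq, Set.mem_empty_iff_false, iff_false]
  rintro ⟨hs, hl, hM, _⟩
  rw [Stt_len1 hs hl] at hM
  simp [Mx] at hM

lemma sa1_zero (j c : ℕ) : sa 1 j c = 0 := by rw [sa, SA1_empty, Set.ncard_empty]
lemma sb1_zero (j c : ℕ) : sb 1 j c = 0 := by rw [sb, SB1_empty, Set.ncard_empty]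

/-- boundary: bb n (n-1) = 0 for n ≥ 2 -/
lemma bb_top {n : ℕ} (hn : 2 ≤ n) : bb n (n-1) = 0 := by
  rw [bb]
  convert Set.ncard_empty (List ℕ)
  ext w
  simp only [bSet, Set.mem_setOf_eq, Set.mem_empty_iff_false, iff_false]
  rintro ⟨hs, hl, ha⟩
  have h1 := ascN_lt_len hs.ne_nil
  have hM : Mx w = 0 := by omega
  have := ascN_zero_of_Mx_zero hM
  omega

/-- boundary: bb n (n-2) = 0 for n ≥ 3 -/
lemma bb_top2 {n : ℕ} (hn : 3 ≤ n) : bb n (n-2) = 0 := by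
  rw [bb]
  convert Set.ncard_empty (List ℕ)
  ext w
  simp only [bSet, Set.mem_setOf_eq, Set.mem_empty_iff_false, iff_false]
  rintro ⟨hs, hl, ha⟩
  have h1 := ascN_lt_len hs.ne_nil
  have hM : Mx w ≤ 1 := by omega
  rcases Nat.eq_zero_or_pos (Mx w) with hM0 | hMpos
  · have := ascN_zero_of_Mx_zero hM0
    omega
  · -- Mx w = 1, ascN w = n - 1 : every adjacent pair ascends
    have hMx1 : Mx w = 1 := by omega
    have hasc : ascN w = w.length - 1 := by omega
    obtain ⟨⟨t, rfl⟩, _⟩ := hs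
    obtain ⟨y, z, t'', rfl⟩ : ∃ y z t'', t = y :: z :: t'' := by
      cases t with
      | nil => simp at hl; omega
      | cons y t' =>
        cases t' with
        | nil => simp at hl; omega
        | cons z t'' => exact ⟨y, z, t'', rfl⟩
    set w := (0 : ℕ) :: y :: z :: t'' with hw
    have hzip : (w.zip w.tail).length = w.length - 1 := by
      rw [List.length_zip]
      simp [hw]
    have hall : ∀ p ∈ w.zip w.tail, p.1 < p.2 := by
      have hfil : (w.zip w.tail).filter (fun p => decide (p.1 < p.2)) = w.zip w.tail := by
        apply List.filter_sublist.eq_of_length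
        rw [← ascN] at *
        omega
      intro p hp
      rw [← hfil] at hp
      have := List.of_mem_filter hp
      simpa using this
    have h0y : ((0:ℕ), y) ∈ w.zip w.tail := by
      rw [hw]; simp [List.zip_cons_cons]
    have hyz : (y, z) ∈ w.zip w.tail := by
      rw [hw]; simp [List.zip_cons_cons]
    have hy := hall _ h0y
    have hz := hall _ hyz
    simp at hy hz
    have hzmem : z ∈ w := by rw [hw]; simp
    have := mem_le_Mx hzmem
    omega

/-- initial values -/
lemma bb_one : bb 1 0 = 1 := by
  rw [bb]
  have : bSet 1 0 = {[0]} := by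
    ext w
    constructor
    · rintro ⟨hs, hl, _⟩
      simp [Stt_len1 hs hl]
    · rintro rfl
      exact ⟨Stt_single, rfl, by simp [ascN, Mx]⟩
  rw [this]
  simp

lemma Stt_twoList {w : List ℕ} (hs : Stt w) (hl : w.length = 2) :
    ∃ y, w = [0, y] ∧ y ≤ 1 := by
  obtain ⟨⟨t, rfl⟩, hasc, _, _⟩ := hs
  obtain ⟨y, rfl⟩ : ∃ y, t = [y] := by
    cases t with
    | nil => simp at hl
    | cons y t' =>
      cases t' with
      | nil => exact ⟨y, rfl⟩
      | cons z t'' => simp at hl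
  refine ⟨y, rfl, ?_⟩
  have := hasc.2 1 (by omega) (by simp)
  simpa [ascN] using this

lemma bb_two : bb 2 0 = 2 := by
  rw [bb]
  have : bSet 2 0 = {[0,0], [0,1]} := by
    ext w
    constructor
    · rintro ⟨hs, hl, _⟩
      obtain ⟨y, rfl, hy⟩ := Stt_twoList hs hl
      interval_cases y
      · left; rfl
      · right; rfl
    · rintro (rfl | rfl)
      · refine ⟨Stt_snoc_build Stt_single (by simp [ascN]) (Or.inl rfl), rfl, ?_⟩
        simp [ascN, Mx]
      · refine ⟨Stt_snoc_build Stt_single (by simp [ascN]) ?_, rfl, ?_⟩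
        · right
          constructor
          · simp [Mx]
          · simp
        · simp [ascN, Mx]
  rw [this]
  rw [Set.ncard_pair (by simp)]

lemma bb_two_one : bb 2 1 = 0 := by
  have : (2:ℕ) - 1 = 1 := rfl
  have h := bb_top (n := 2) (by omega)
  simpa using h

/-- bridge to b0111 -/
lemma b0111_eq_bb (n i : ℕ) (hn : 1 ≤ n) : b0111 n i = bb n i := by
  rw [b0111, bb]
  congr 1
  ext w
  simp only [Set.mem_setOf_eq, bSet]
  constructor
  · rintro ⟨hl, hasc, hav1, hav2, heq⟩
    obtain ⟨t, rfl⟩ : ∃ t, w = 0 :: t := by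
      cases w with
      | nil => simp at hl; omega
      | cons a t =>
        have := hasc.1 (by simp)
        simp at this
        exact ⟨t, by rw [this]⟩
    obtain ⟨h1, h2⟩ := (char_avoids t).1 ⟨hav1, hav2⟩
    exact ⟨⟨⟨t, rfl⟩, hasc, h1, h2⟩, hl, heq⟩
  · rintro ⟨⟨⟨t, rfl⟩, hasc, h1, h2⟩, hl, heq⟩
    obtain ⟨hav1, hav2⟩ := (char_avoids t).2 ⟨h1, h2⟩
    exact ⟨hl, hasc, hav1, hav2, heq⟩

end L7

namespace L7
open List

lemma su_eq (m : ℕ) (hm : 1 ≤ m) : ∀ i, su m i = ∑ j ∈ Finset.Icc i (m-1), bb m j := by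
  suffices h : ∀ d i, m - i ≤ d → su m i = ∑ j ∈ Finset.Icc i (m-1), bb m j by
    intro i; exact h (m - i) i le_rfl
  intro d
  induction d with
  | zero =>
    intro i hi
    rw [su_zero (by omega), Finset.Icc_eq_empty (by omega), Finset.sum_empty]
  | succ d ih =>
    intro i hi
    rcases le_or_gt m i with him | him
    · rw [su_zero him, Finset.Icc_eq_empty (by omega), Finset.sum_empty]
    · have hins : Finset.Icc i (m-1) = insert i (Finset.Icc (i+1) (m-1)) := by
        ext x; simp only [Finset.mem_Icc, Finset.mem_insert]; omega
      rw [su_rec m i, ih (i+1) (by omega), hins,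
        Finset.sum_insert (by simp only [Finset.mem_Icc]; omega)]

lemma sb1_rec' (m j : ℕ) (hm : 2 ≤ m) : sb m j 1 = su (m-1) j := by
  obtain ⟨k, rfl⟩ : ∃ k, m = k + 1 := ⟨m-1, by omega⟩
  have : k + 1 - 1 = k := by omega
  rw [this]
  exact sb1_rec k j (by omega)

lemma sa_eq (m : ℕ) (hm : 1 ≤ m) (j : ℕ) :
    sa m j 1 = ∑ t ∈ Finset.Icc 1 (m-2), su t j := by
  induction m with
  | zero => omega
  | succ k ih =>
    rcases Nat.eq_zero_or_pos k with rfl | hk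
    · rw [sa1_zero, Finset.Icc_eq_empty (by omega), Finset.sum_empty]
    · rw [sa_rec k j 1 hk]
      rcases eq_or_lt_of_le (Nat.succ_le_of_lt hk) with h1 | h2
    -- k = 1
      · rw [← h1, sa1_zero, sb1_zero, Finset.Icc_eq_empty (by omega), Finset.sum_empty]
        omega
      · have hk2 : 2 ≤ k := h2
        have ihk := ih (by omega)
        rw [ihk, sb1_rec' k j hk2]
        have e1 : k + 1 - 2 = k - 1 := by omega
        rw [e1]
        have hins : Finset.Icc 1 (k-1) = insert (k-1) (Finset.Icc 1 (k-2)) := by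
          ext x; simp only [Finset.mem_Icc, Finset.mem_insert]; omega
        rw [hins, Finset.sum_insert (by simp only [Finset.mem_Icc]; omega)]
        omega

lemma step_bb (m i : ℕ) (hm : 2 ≤ m) (hi : i ≤ m - 2) :
    bb (m+1) i = bb m i + (∑ j ∈ Finset.Icc i (m-2), (bb m j + bb (m-1) j))
      + (if 0 < i then sa m (i-1) 1 else 0) := by
  have hm1 : 1 ≤ m := by omega
  have hsum : ∑ j ∈ Finset.Icc i (m-2), (bb m j + bb (m-1) j) = su m i + sb m i 1 := by
    rw [Finset.sum_add_distrib]
    congr 1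
    · rw [su_eq m hm1 i]
      have hins : Finset.Icc i (m-1) = insert (m-1) (Finset.Icc i (m-2)) := by
        ext x; simp only [Finset.mem_Icc, Finset.mem_insert]; omega
      rw [hins, Finset.sum_insert (by simp only [Finset.mem_Icc]; omega), bb_top hm,
        zero_add]
    · rw [sb1_rec' m i hm, su_eq (m-1) (by omega) i]
      have e : m - 1 - 1 = m - 2 := by omega
      rw [e]
  rcases Nat.eq_zero_or_pos i with rfl | hip
  · rw [if_neg (by omega), hsum]
    rw [show m + 1 = m + 1 from rfl]
    rw [bb_split_zero (n := m+1) (by omega), bb_split_zero (n := m) (by omega)]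
    rw [sa_rec m 0 1 hm1, sa_rec m 0 2 hm1, sb1_rec m 0 hm1, sb2_rec0 m hm1]
    omega
  · rw [if_pos hip, hsum]
    rw [bb_split_pos (n := m+1) hip, bb_split_pos (n := m) hip]
    rw [sa_rec m i 1 hm1, sa_rec m i 2 hm1, sb1_rec m i hm1, sb2_recp m i hm1 hip]
    omega

lemma third_bb (m i : ℕ) (hm : 2 ≤ m) (hip : 1 ≤ i) (hi : i ≤ m - 2) :
    sa m (i-1) 1 = ∑ d ∈ Finset.Icc 1 (m-i-1), ∑ j ∈ Finset.Icc (i-1) (m-d-2), bb (m-d-1) j := by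
  rw [sa_eq m (by omega) (i-1)]
  have hres : ∑ t ∈ Finset.Icc 1 (m-2), su t (i-1) = ∑ t ∈ Finset.Icc i (m-2), su t (i-1) := by
    symm
    apply Finset.sum_subset
    · intro x hx; simp only [Finset.mem_Icc] at *; omega
    · intro x hx hnx
      simp only [Finset.mem_Icc] at hx hnx
      exact su_zero (by omega)
  rw [hres]
  refine Finset.sum_nbij' (fun t => m-1-t) (fun d => m-1-d) ?_ ?_ ?_ ?_ ?_
  · intro t ht; simp only [Finset.mem_Icc] at *; omega
  · intro d hd; simp only [Finset.mem_Icc] at *; omega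
  · intro t ht; simp only [Finset.mem_Icc] at ht
    show m - 1 - (m - 1 - t) = t
    omega
  · intro d hd; simp only [Finset.mem_Icc] at hd
    show m - 1 - (m - 1 - d) = d
    omega
  · intro t ht
    simp only [Finset.mem_Icc] at ht
    have e1 : m - (m-1-t) - 2 = t - 1 := by omega
    have e2 : m - (m-1-t) - 1 = t := by omega
    rw [e1, e2, su_eq t (by omega) (i-1)]

lemma main_bb (n i : ℕ) (hn : 3 ≤ n) (hi : i ≤ n - 3) :
    bb n i = bb (n-1) i + (∑ j ∈ Finset.Icc i (n-3), (bb (n-1) j + bb (n-2) j))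
      + (if 0 < i then ∑ d ∈ Finset.Icc 1 (n-i-2), ∑ j ∈ Finset.Icc (i-1) (n-d-3), bb (n-d-2) j
         else 0) := by
  obtain ⟨m, rfl⟩ : ∃ m, n = m + 1 := ⟨n-1, by omega⟩
  have hm : 2 ≤ m := by omega
  have e1 : m + 1 - 1 = m := by omega
  have e2 : m + 1 - 2 = m - 1 := by omega
  have e3 : m + 1 - 3 = m - 2 := by omega
  have e4 : m + 1 - i - 2 = m - i - 1 := by omega
  rw [e1, e2, e3, e4, step_bb m i hm (by omega)]
  congr 1
  rcases Nat.eq_zero_or_pos i with rfl | hip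
  · simp
  · rw [if_pos hip, if_pos hip, third_bb m i hm hip (by omega)]
    refine Finset.sum_congr rfl (fun d _ => ?_)
    have f1 : m + 1 - d - 3 = m - d - 2 := by omega
    have f2 : m + 1 - d - 2 = m - d - 1 := by omega
    rw [f1, f2]

end L7


/-- Recurrence and initial/boundary conditions for `b_{n,i}` (Lemma 7). -/
theorem b0111_recurrence :
    (∀ n i : ℕ, 3 ≤ n → i ≤ n - 3 →
      b0111 n i = b0111 (n-1) i
        + (∑ j ∈ Finset.Icc i (n-3), (b0111 (n-1) j + b0111 (n-2) j))
        + (if 0 < i then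
            ∑ d ∈ Finset.Icc 1 (n-i-2), ∑ j ∈ Finset.Icc (i-1) (n-d-3), b0111 (n-d-2) j
           else 0)) ∧
    b0111 1 0 = 1 ∧ b0111 2 0 = 2 ∧ b0111 2 1 = 0 ∧
    (∀ n : ℕ, 3 ≤ n → b0111 n (n-1) = 0 ∧ b0111 n (n-2) = 0) := by
  refine ⟨?_, ?_, ?_, ?_, ?_⟩
  · intro n i hn hi
    rw [L7.b0111_eq_bb n i (by omega), L7.b0111_eq_bb (n-1) i (by omega)]
    have hsum1 : ∑ j ∈ Finset.Icc i (n-3), (b0111 (n-1) j + b0111 (n-2) j)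
        = ∑ j ∈ Finset.Icc i (n-3), (L7.bb (n-1) j + L7.bb (n-2) j) :=
      Finset.sum_congr rfl fun j _ => by
        rw [L7.b0111_eq_bb (n-1) j (by omega), L7.b0111_eq_bb (n-2) j (by omega)]
    rw [hsum1]
    have hsum2 : (if 0 < i then
          ∑ d ∈ Finset.Icc 1 (n-i-2), ∑ j ∈ Finset.Icc (i-1) (n-d-3), b0111 (n-d-2) j
         else 0)
        = (if 0 < i then
          ∑ d ∈ Finset.Icc 1 (n-i-2), ∑ j ∈ Finset.Icc (i-1) (n-d-3), L7.bb (n-d-2) j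
         else 0) := by
      rcases Nat.eq_zero_or_pos i with rfl | hip
      · rw [if_neg (by omega), if_neg (by omega)]
      · rw [if_pos hip, if_pos hip]
        refine Finset.sum_congr rfl (fun d hd => ?_)
        simp only [Finset.mem_Icc] at hd
        refine Finset.sum_congr rfl (fun j _ => ?_)
        exact L7.b0111_eq_bb (n-d-2) j (by omega)
    rw [hsum2]
    exact L7.main_bb n i hn hi
  · rw [L7.b0111_eq_bb 1 0 (by omega)]; exact L7.bb_one
  · rw [L7.b0111_eq_bb 2 0 (by omega)]; exact L7.bb_two
  · rw [L7.b0111_eq_bb 2 1 (by omega)]; exact L7.bb_two_one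
  · intro n hn
    constructor
    · rw [L7.b0111_eq_bb n (n-1) (by omega)]; exact L7.bb_top (by omega)
    · rw [L7.b0111_eq_bb n (n-2) (by omega)]; exact L7.bb_top2 hn
end
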